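/- arXiv:1409.6084 — 9 statements merged into one kernel-verified Lean document; each statement's English description precedes it below -/
import Mathlib

section
/- Let η ∈ [0,1], b ∈ ℝ^n, let (X,Σ,ν) be a finite measure space and let τ : X → ℝ^n be a measurable function with |τ(x)| = 1 for ν-almost every x. Then ψ̃(b, ∫_X τ dν) ≤ ∫_X ψ(b, τ(x)) dν(x), where the integral of τ is taken componentwise. -/
open MeasureTheory

/-- The energy density `ψ(b,t) = |b|² + η (b·t)²`. -/
noncomputable def psi (n : ℕ) (η : ℝ) (b t : EuclideanSpace ℝ (Fin n)) : ℝ :=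
  ‖b‖ ^ 2 + η * (inner ℝ b t : ℝ) ^ 2

/-- The positively one-homogeneous extension
`ψ̃(b,T) = |T||b|² + η (b·T)²/|T|`, with `ψ̃(b,0) = 0`. -/
noncomputable def psiT (n : ℕ) (η : ℝ) (b T : EuclideanSpace ℝ (Fin n)) : ℝ :=
  ‖T‖ * ‖b‖ ^ 2 + η * (inner ℝ b T : ℝ) ^ 2 / ‖T‖

/-- Jensen-type inequality: `ψ̃(b, ∫ τ dν) ≤ ∫ ψ(b, τ(x)) dν(x)` for a
measurable `τ` with unit norm a.e. on a finite measure space. -/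
theorem psiT_integral_le (n : ℕ) (hn : 1 ≤ n) (η : ℝ) (hη : η ∈ Set.Icc (0 : ℝ) 1)
    (b : EuclideanSpace ℝ (Fin n)) {X : Type*} [MeasurableSpace X]
    (ν : Measure X) [IsFiniteMeasure ν]
    (τ : X → EuclideanSpace ℝ (Fin n)) (hτmeas : Measurable τ)
    (hτ : ∀ᵐ x ∂ν, ‖τ x‖ = 1) :
    psiT n η b (∫ x, τ x ∂ν) ≤ ∫ x, psi n η b (τ x) ∂ν := by
  obtain ⟨hη0, hη1⟩ := hη
  set T : EuclideanSpace ℝ (Fin n) := ∫ x, τ x ∂ν with hT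
  set m : ℝ := (ν Set.univ).toReal with hm
  have hm0 : 0 ≤ m := ENNReal.toReal_nonneg
  set f : X → ℝ := fun x => (inner ℝ b (τ x) : ℝ) with hf
  -- integrability
  have hτint : Integrable τ ν := by
    refine (integrable_const (1:ℝ)).mono' hτmeas.aestronglyMeasurable ?_
    exact hτ.mono fun x hx => by simp [hx]
  have hfmeas : Measurable f := (measurable_const.inner hτmeas)
  have hfbound : ∀ᵐ x ∂ν, |f x| ≤ ‖b‖ := by
    refine hτ.mono fun x hx => ?_
    calc |f x| = ‖(inner ℝ b (τ x) : ℝ)‖ := rfl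
    _ ≤ ‖b‖ * ‖τ x‖ := norm_inner_le_norm _ _
    _ = ‖b‖ := by rw [hx, mul_one]
  have hfint : Integrable f ν := by
    refine (integrable_const (‖b‖)).mono' hfmeas.aestronglyMeasurable ?_
    exact hfbound
  have hf2int : Integrable (fun x => f x ^ 2) ν := by
    refine (integrable_const (‖b‖ ^ 2)).mono' (hfmeas.pow_const 2).aestronglyMeasurable ?_
    refine hfbound.mono fun x hx => ?_
    have : |f x ^ 2| = |f x| ^ 2 := by rw [abs_pow]
    rw [Real.norm_eq_abs, this]
    exact pow_le_pow_left₀ (abs_nonneg _) hx 2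
  set A : ℝ := ∫ x, f x ^ 2 ∂ν with hA
  have hA0 : 0 ≤ A := integral_nonneg fun x => sq_nonneg _
  set B : ℝ := ‖b‖ ^ 2 with hB
  have hB0 : 0 ≤ B := sq_nonneg _
  set u : ℝ := (inner ℝ b T : ℝ) with hu
  have huf : u = ∫ x, f x ∂ν := by
    rw [hu, hT, integral_inner hτint]
  set s : ℝ := ‖T‖ with hs
  have hs0 : 0 ≤ s := norm_nonneg _
  -- RHS value
  have hRHS : ∫ x, psi n η b (τ x) ∂ν = B * m + η * A := by
    have : (fun x => psi n η b (τ x)) = fun x => B + η * f x ^ 2 := rfl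
    rw [this, integral_add (integrable_const _) (hf2int.const_mul η),
      integral_const, integral_const_mul]
    simp [hm, hA, hB, mul_comm, Measure.real]
  -- s ≤ m
  have hsm : s ≤ m := by
    calc s ≤ ∫ x, ‖τ x‖ ∂ν := norm_integral_le_integral_norm _
    _ = ∫ x, (1:ℝ) ∂ν := integral_congr_ae (hτ.mono fun x hx => hx)
    _ = m := by simp [hm, Measure.real]
  -- Cauchy-Schwarz-ish bounds
  have hu2 : u ^ 2 ≤ B * s ^ 2 := by
    have h1 : |u| ≤ ‖b‖ * ‖T‖ := by
      rw [hu]; exact abs_real_inner_le_norm _ _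
    calc u ^ 2 = |u| ^ 2 := (sq_abs u).symm
    _ ≤ (‖b‖ * ‖T‖) ^ 2 := pow_le_pow_left₀ (abs_nonneg _) h1 2
    _ = B * s ^ 2 := by rw [hB, hs]; ring
  rw [hRHS]
  simp only [psiT, ← hs, ← hu, ← hB]
  clear_value T m f A B u s
  rcases eq_or_lt_of_le hs0 with hseq | hspos
  · -- s = 0 case: T = 0
    have hT0 : T = 0 := norm_eq_zero.mp (hs ▸ hseq.symm)
    have : u = 0 := by rw [hu, hT0]; simp
    rw [← hseq, this]
    simp
    positivity
  · -- main case
    have hmpos : 0 < m := lt_of_lt_of_le hspos hsm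
    -- Cauchy-Schwarz: u^2 ≤ m * A via variance
    have hCS : u ^ 2 ≤ m * A := by
      set c : ℝ := u / m with hc
      have hvar : 0 ≤ ∫ x, (f x - c) ^ 2 ∂ν := integral_nonneg fun x => sq_nonneg _
      have e1 : (fun x => (f x - c) ^ 2) = fun x => f x ^ 2 + (-2 * c * f x + c ^ 2) := by
        funext x; ring
      have hg : Integrable (fun x => -2 * c * f x + c ^ 2) ν :=
        (hfint.const_mul (-2 * c)).add (integrable_const (c ^ 2))
      have hexp : ∫ x, (f x - c) ^ 2 ∂ν = A - 2 * c * u + c ^ 2 * m := by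
        calc ∫ x, (f x - c) ^ 2 ∂ν
            = ∫ x, (f x ^ 2 + (-2 * c * f x + c ^ 2)) ∂ν := by rw [e1]
          _ = (∫ x, f x ^ 2 ∂ν) + ∫ x, (-2 * c * f x + c ^ 2) ∂ν := integral_add hf2int hg
          _ = A + ((∫ x, -2 * c * f x ∂ν) + ∫ _x, (c ^ 2 : ℝ) ∂ν) := by
              rw [← hA, integral_add (hfint.const_mul (-2 * c)) (integrable_const (c ^ 2))]
          _ = A + (-2 * c * u + c ^ 2 * m) := by
              rw [integral_const_mul, ← huf, integral_const]; simp [hm, mul_comm, Measure.real]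
          _ = A - 2 * c * u + c ^ 2 * m := by ring
      rw [hexp, hc] at hvar
      have h2 : A - 2 * (u / m) * u + (u / m) ^ 2 * m = A - u ^ 2 / m := by
        field_simp; ring
      rw [h2] at hvar
      have h3 : u ^ 2 / m ≤ A := by linarith
      rw [div_le_iff₀ hmpos] at h3
      linarith [h3]
    have hkey : u ^ 2 / s ≤ A + (m - s) * B := by
      rw [div_le_iff₀ hspos]
      nlinarith [mul_le_mul_of_nonneg_right hCS hs0, mul_le_mul_of_nonneg_right hu2 (sub_nonneg.mpr hsm), sq_nonneg (m - s), mul_pos hspos hmpos]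
    calc s * B + η * u ^ 2 / s = s * B + η * (u ^ 2 / s) := by ring
    _ ≤ s * B + η * (A + (m - s) * B) := by
        apply add_le_add_right
        exact mul_le_mul_of_nonneg_left hkey hη0
    _ ≤ m * B + η * A := by nlinarith [mul_nonneg (sub_nonneg.mpr hsm) hB0]
    _ = B * m + η * A := by ring
end

section
/- For every η ∈ [0,1] and every b ∈ ℝ^n, the function T ↦ ψ̃(b,T) is convex on ℝ^n. -/
lemma psiT_zero (n : ℕ) (η : ℝ) (b : EuclideanSpace ℝ (Fin n)) :
    psiT n η b 0 = 0 := by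
  simp [psiT]

lemma psiT_nonneg (n : ℕ) (η : ℝ) (hη : 0 ≤ η) (b T : EuclideanSpace ℝ (Fin n)) :
    0 ≤ psiT n η b T := by
  unfold psiT
  have h1 : 0 ≤ ‖T‖ * ‖b‖ ^ 2 := by positivity
  have h2 : 0 ≤ η * (inner ℝ b T : ℝ) ^ 2 / ‖T‖ := by positivity
  linarith

lemma psiT_smul (n : ℕ) (η : ℝ) (b T : EuclideanSpace ℝ (Fin n)) (c : ℝ) (hc : 0 ≤ c) :
    psiT n η b (c • T) = c * psiT n η b T := by
  unfold psiT
  rw [norm_smul, real_inner_smul_right]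
  rw [Real.norm_eq_abs, abs_of_nonneg hc]
  rcases eq_or_lt_of_le hc with h | h
  · simp [← h]
  rcases eq_or_ne T 0 with rfl | hT
  · simp
  have hT' : (0:ℝ) < ‖T‖ := norm_pos_iff.mpr hT
  field_simp

/-- Key scalar inequality. -/
lemma scalar_ineq (η a p q r u v : ℝ) (hη0 : 0 ≤ η) (hη1 : η ≤ 1) (ha : 0 ≤ a)
    (hp : 0 < p) (hq : 0 < q) (hr : 0 < r) (hrpq : r ≤ p + q)
    (hw : (u + v) ^ 2 ≤ a * r ^ 2) :
    r * a + η * (u + v) ^ 2 / r ≤ (p * a + η * u ^ 2 / p) + (q * a + η * v ^ 2 / q) := by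
  have hpq : 0 < p + q := by linarith
  -- Step 1: monotonicity in the norm variable
  have step1 : r * a + η * (u + v) ^ 2 / r ≤ (p + q) * a + η * (u + v) ^ 2 / (p + q) := by
    have h : η * (u + v) ^ 2 / r - η * (u + v) ^ 2 / (p + q) ≤ (p + q) * a - r * a := by
      rw [div_sub_div _ _ (ne_of_gt hr) (ne_of_gt hpq), div_le_iff₀ (by positivity)]
      nlinarith [mul_le_mul_of_nonneg_right hw (sub_nonneg.mpr hrpq),
        mul_nonneg (sub_nonneg.mpr hrpq) (sq_nonneg (u + v)),
        mul_nonneg ha (mul_nonneg hr.le (sub_nonneg.mpr hrpq)),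
        mul_nonneg (mul_nonneg ha hr.le) (mul_nonneg (sub_nonneg.mpr hrpq) (sub_nonneg.mpr hrpq))]
    linarith
  -- Step 2: Engel form (Cauchy–Schwarz)
  have step2 : η * (u + v) ^ 2 / (p + q) ≤ η * u ^ 2 / p + η * v ^ 2 / q := by
    rw [div_add_div _ _ (ne_of_gt hp) (ne_of_gt hq), div_le_div_iff₀ hpq (by positivity)]
    nlinarith [sq_nonneg (u * q - v * p), mul_nonneg hη0 (sq_nonneg (u * q - v * p))]
  linarith

lemma psiT_add (n : ℕ) (η : ℝ) (hη0 : 0 ≤ η) (hη1 : η ≤ 1)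
    (b S T : EuclideanSpace ℝ (Fin n)) :
    psiT n η b (S + T) ≤ psiT n η b S + psiT n η b T := by
  rcases eq_or_ne S 0 with rfl | hS
  · simp [psiT_zero]
  rcases eq_or_ne T 0 with rfl | hT
  · simp [psiT_zero]
  rcases eq_or_ne (S + T) 0 with hST | hST
  · rw [hST, psiT_zero]
    have := psiT_nonneg n η hη0 b S
    have := psiT_nonneg n η hη0 b T
    linarith
  have hp : (0:ℝ) < ‖S‖ := norm_pos_iff.mpr hS
  have hq : (0:ℝ) < ‖T‖ := norm_pos_iff.mpr hT
  have hr : (0:ℝ) < ‖S + T‖ := norm_pos_iff.mpr hST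
  have hcs : |(inner ℝ b (S + T) : ℝ)| ≤ ‖b‖ * ‖S + T‖ := abs_real_inner_le_norm b (S + T)
  have hw : ((inner ℝ b S : ℝ) + (inner ℝ b T : ℝ)) ^ 2 ≤ ‖b‖ ^ 2 * ‖S + T‖ ^ 2 := by
    have : (inner ℝ b (S + T) : ℝ) = (inner ℝ b S : ℝ) + (inner ℝ b T : ℝ) := inner_add_right b S T
    rw [← this]
    calc (inner ℝ b (S + T) : ℝ) ^ 2 = |(inner ℝ b (S + T) : ℝ)| ^ 2 := (sq_abs _).symm
      _ ≤ (‖b‖ * ‖S + T‖) ^ 2 := by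
          apply pow_le_pow_left₀ (abs_nonneg _) hcs
      _ = ‖b‖ ^ 2 * ‖S + T‖ ^ 2 := by ring
  have key := scalar_ineq η (‖b‖ ^ 2) ‖S‖ ‖T‖ ‖S + T‖ (inner ℝ b S : ℝ) (inner ℝ b T : ℝ)
    hη0 hη1 (by positivity) hp hq hr (norm_add_le S T) hw
  unfold psiT
  rw [inner_add_right]
  linarith

/-- For every `η ∈ [0,1]` and `b`, the map `T ↦ ψ̃(b,T)` is convex on `ℝⁿ`. -/
theorem psiT_convex (n : ℕ) (hn : 1 ≤ n) (η : ℝ) (hη : η ∈ Set.Icc (0 : ℝ) 1)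
    (b : EuclideanSpace ℝ (Fin n)) :
    ConvexOn ℝ Set.univ (fun T => psiT n η b T) := by
  obtain ⟨hη0, hη1⟩ := hη
  refine ⟨convex_univ, fun x _ y _ a c ha hc hac => ?_⟩
  calc psiT n η b (a • x + c • y)
      ≤ psiT n η b (a • x) + psiT n η b (c • y) := psiT_add n η hη0 hη1 b _ _
    _ = a * psiT n η b x + c * psiT n η b y := by
        rw [psiT_smul n η b x a ha, psiT_smul n η b y c hc]
    _ = a • psiT n η b x + c • psiT n η b y := by simp [smul_eq_mul]
end

section
/- Let 2 ≤ n ≤ 9, η ∈ [0,1], and b ∈ ℤ^n. If β = max_i |b_i| > 1, then there exists a vector a ∈ ℤ^n such that max_i |a_i| = 1, max_i |b_i − a_i| = β − 1, and ψ(b − a, t) + ψ(a, t) ≤ ψ(b, t) for every unit vector t ∈ ℝ^n. -/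
/-- Embedding of integer vectors into `ℝⁿ` (with Euclidean structure). -/
noncomputable def intoE (n : ℕ) (b : Fin n → ℤ) : EuclideanSpace ℝ (Fin n) :=
  WithLp.toLp 2 (fun i => (b i : ℝ))

lemma sgnf (c : ℤ) : (c - c.sign) * c.sign = |c - c.sign| ∧ |c.sign| ≤ 1 ∧
    (c ≠ 0 → |c - c.sign| = |c| - 1) := by
  rcases lt_trichotomy c 0 with h|h|h
  · rw [Int.sign_eq_neg_one_of_neg h, abs_of_nonpos (by omega : c - (-1) ≤ 0),
      abs_of_neg h]
    refine ⟨by ring, by norm_num, fun _ => by ring⟩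
  · simp [h]
  · rw [Int.sign_eq_one_of_pos h, abs_of_nonneg (by omega : (0:ℤ) ≤ c - 1), abs_of_pos h]
    refine ⟨by ring, by norm_num, fun _ => rfl⟩

lemma key_ineq {n : ℕ} {η : ℝ} (hη0 : 0 ≤ η) (hη1 : η ≤ 1)
    (x y t : EuclideanSpace ℝ (Fin n)) (ht : ‖t‖ = 1)
    (h0 : 0 ≤ (inner ℝ x y : ℝ)) (h3 : ‖x‖ * ‖y‖ ≤ 3 * (inner ℝ x y : ℝ)) :
    0 ≤ (inner ℝ x y : ℝ) + η * ((inner ℝ x t : ℝ) * (inner ℝ y t : ℝ)) := by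
  set u : ℝ := inner ℝ x t with hu
  set v : ℝ := inner ℝ y t with hv
  set x' : EuclideanSpace ℝ (Fin n) := x - u • t with hx'
  set y' : EuclideanSpace ℝ (Fin n) := y - v • t with hy'
  have htt : (inner ℝ t t : ℝ) = 1 := by
    rw [real_inner_self_eq_norm_sq, ht]; norm_num
  have hxt : (inner ℝ x' t : ℝ) = 0 := by
    rw [hx', inner_sub_left, real_inner_smul_left, htt]; ring
  have hyt : (inner ℝ y' t : ℝ) = 0 := by
    rw [hy', inner_sub_left, real_inner_smul_left, htt]; ring
  have hxy' : (inner ℝ x' y' : ℝ) = (inner ℝ x y : ℝ) - u * v := by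
    rw [hx', hy', inner_sub_left, inner_sub_right, inner_sub_right,
      real_inner_smul_left, real_inner_smul_right, real_inner_smul_left,
      real_inner_smul_right, htt, real_inner_comm y t, ← hu, ← hv]
    ring
  have hnx : ‖x‖ ^ 2 = ‖x'‖ ^ 2 + u ^ 2 := by
    have : x = x' + u • t := by rw [hx']; abel
    rw [this, norm_add_sq_real, real_inner_smul_right, hxt, norm_smul, ht]
    simp [abs_sq]
  have hny : ‖y‖ ^ 2 = ‖y'‖ ^ 2 + v ^ 2 := by
    have : y = y' + v • t := by rw [hy']; abel
    rw [this, norm_add_sq_real, real_inner_smul_right, hyt, norm_smul, ht]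
    simp [abs_sq]
  have hcs : |(inner ℝ x' y' : ℝ)| ≤ ‖x'‖ * ‖y'‖ := abs_real_inner_le_norm x' y'
  have h2 : ‖x'‖ * ‖y'‖ + |u| * |v| ≤ ‖x‖ * ‖y‖ := by
    have hxx : (0:ℝ) ≤ ‖x‖ := norm_nonneg _
    have hyy : (0:ℝ) ≤ ‖y‖ := norm_nonneg _
    have hxx' : (0:ℝ) ≤ ‖x'‖ := norm_nonneg _
    have hyy' : (0:ℝ) ≤ ‖y'‖ := norm_nonneg _
    nlinarith [sq_nonneg (‖x'‖ * |v| - ‖y'‖ * |u|), abs_nonneg u, abs_nonneg v,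
      sq_abs u, sq_abs v, mul_nonneg hxx hyy,
      sq_nonneg (‖x'‖ * ‖y'‖ + |u| * |v|)]
  have h4 : (inner ℝ x y : ℝ) - ‖x‖ * ‖y‖ ≤ 2 * (u * v) := by
    have h5 : (inner ℝ x' y' : ℝ) ≤ ‖x'‖ * ‖y'‖ := (le_abs_self _).trans hcs
    have h6 : -(u * v) ≤ |u| * |v| := by
      rw [← abs_mul]; exact neg_le_abs _
    linarith
  nlinarith [mul_nonneg hη0 (sub_nonneg.2 h4)]

/-- Splitting lemma for `2 ≤ n ≤ 9`: if `β = max_i |b_i| > 1`, there is `a ∈ ℤⁿ`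
with `max_i |a_i| = 1`, `max_i |b_i - a_i| = β - 1`, and
`ψ(b-a,t) + ψ(a,t) ≤ ψ(b,t)` for every unit vector `t`. -/
theorem psi_splitting_small_n (n : ℕ) (hn2 : 2 ≤ n) (hn9 : n ≤ 9)
    (η : ℝ) (hη : η ∈ Set.Icc (0 : ℝ) 1) (b : Fin n → ℤ) (β : ℤ)
    (hβub : ∀ i, |b i| ≤ β) (hβmem : ∃ i, |b i| = β) (hβ : 1 < β) :
    ∃ a : Fin n → ℤ,
      (∀ i, |a i| ≤ 1) ∧ (∃ i, |a i| = 1) ∧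
      (∀ i, |b i - a i| ≤ β - 1) ∧ (∃ i, |b i - a i| = β - 1) ∧
      ∀ t : EuclideanSpace ℝ (Fin n), ‖t‖ = 1 →
        psi n η (intoE n (b - a)) t + psi n η (intoE n a) t ≤ psi n η (intoE n b) t := by
  obtain ⟨i₀, hi₀⟩ := hβmem
  set a : Fin n → ℤ := fun i => (b i).sign with ha
  have hbi₀ : b i₀ ≠ 0 := by
    intro h; rw [h] at hi₀; simp at hi₀; omega
  have habs : ∀ i, |a i| ≤ 1 := fun i => (sgnf (b i)).2.1
  have hba : ∀ i, |b i - a i| ≤ β - 1 := by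
    intro i
    by_cases h : b i = 0
    · simp [ha, h]; omega
    · rw [(sgnf (b i)).2.2 h]; have := hβub i; omega
  have hba₀ : |b i₀ - a i₀| = β - 1 := by
    rw [(sgnf (b i₀)).2.2 hbi₀, hi₀]
  refine ⟨a, habs, ⟨i₀, ?_⟩, hba, ⟨i₀, hba₀⟩, ?_⟩
  · rcases lt_trichotomy (b i₀) 0 with h|h|h
    · simp [ha, Int.sign_eq_neg_one_of_neg h]
    · exact absurd h hbi₀
    · simp [ha, Int.sign_eq_one_of_pos h]
  set x : EuclideanSpace ℝ (Fin n) := intoE n (b - a) with hx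
  set y : EuclideanSpace ℝ (Fin n) := intoE n a with hy
  set S : ℤ := ∑ i, |b i - a i| with hSdef
  have hS0 : 0 ≤ S := Finset.sum_nonneg fun i _ => abs_nonneg _
  have hinner : (inner ℝ x y : ℝ) = (S : ℝ) := by
    rw [hx, hy]
    simp only [intoE, PiLp.inner_apply, PiLp.toLp_apply, RCLike.inner_apply, conj_trivial, Pi.sub_apply]
    rw [hSdef]
    push_cast
    refine Finset.sum_congr rfl fun i _ => ?_
    have h1 : (b i - a i) * a i = |b i - a i| := (sgnf (b i)).1
    rw [show ((b i : ℝ)) - (a i : ℝ) = ((b i - a i : ℤ) : ℝ) by push_cast; ring,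
      ← Int.cast_abs, ← h1]
    push_cast
    ring
  have hSi : (S : ℝ) = (inner ℝ x y : ℝ) := hinner.symm
  have hny2 : ‖y‖ ^ 2 ≤ 9 := by
    rw [← real_inner_self_eq_norm_sq, hy]
    simp only [intoE, PiLp.inner_apply, PiLp.toLp_apply, RCLike.inner_apply, conj_trivial]
    have : ∀ i ∈ Finset.univ, ((a i : ℝ)) * (a i) ≤ 1 := by
      intro i _
      have hz : a i * a i ≤ 1 := by
        rcases abs_le.mp (habs i) with ⟨h1, h2⟩; nlinarith
      exact_mod_cast hz
    calc ∑ i, ((a i : ℝ)) * (a i) ≤ ∑ _i : Fin n, (1:ℝ) := Finset.sum_le_sum this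
      _ = n := by simp
      _ ≤ 9 := by exact_mod_cast hn9
  have hnx2 : ‖x‖ ^ 2 ≤ (S : ℝ) ^ 2 := by
    rw [← real_inner_self_eq_norm_sq, hx]
    simp only [intoE, PiLp.inner_apply, PiLp.toLp_apply, RCLike.inner_apply, conj_trivial, Pi.sub_apply]
    have hz : (∑ i, ((b i - a i : ℤ) : ℝ) * ((b i - a i : ℤ) : ℝ)) =
        ((∑ i, (b i - a i) * (b i - a i) : ℤ) : ℝ) := by push_cast; ring
    rw [hz]
    have hint : (∑ i, (b i - a i) * (b i - a i) : ℤ) ≤ S ^ 2 := by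
      have h1 : ∀ i ∈ Finset.univ, (b i - a i) * (b i - a i) ≤ |b i - a i| * S := by
        intro i _
        have h2 : |b i - a i| ≤ S :=
          Finset.single_le_sum (f := fun j => |b j - a j|)
            (fun j _ => abs_nonneg _) (Finset.mem_univ i)
        calc (b i - a i) * (b i - a i) ≤ |b i - a i| * |b i - a i| := by
              rw [abs_mul_abs_self]
          _ ≤ |b i - a i| * S := mul_le_mul_of_nonneg_left h2 (abs_nonneg _)
      calc (∑ i, (b i - a i) * (b i - a i) : ℤ) ≤ ∑ i, |b i - a i| * S :=
            Finset.sum_le_sum h1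
        _ = S ^ 2 := by rw [← Finset.sum_mul]; ring
    calc ((∑ i, (b i - a i) * (b i - a i) : ℤ) : ℝ) ≤ ((S ^ 2 : ℤ) : ℝ) := by
          exact_mod_cast hint
      _ = (S : ℝ) ^ 2 := by push_cast; ring
  have hS0' : (0:ℝ) ≤ (S:ℝ) := by exact_mod_cast hS0
  have hnx : ‖x‖ ≤ (S:ℝ) := by nlinarith [norm_nonneg x]
  have hny : ‖y‖ ≤ 3 := by nlinarith [norm_nonneg y]
  have h3 : ‖x‖ * ‖y‖ ≤ 3 * (inner ℝ x y : ℝ) := by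
    rw [hinner]
    calc ‖x‖ * ‖y‖ ≤ (S:ℝ) * 3 := mul_le_mul hnx hny (norm_nonneg _) hS0'
      _ = 3 * (S:ℝ) := by ring
  have h0 : 0 ≤ (inner ℝ x y : ℝ) := by rw [hinner]; exact hS0'
  have hsum : intoE n b = x + y := by
    rw [hx, hy]
    ext i
    show ((b i : ℝ)) = ((b i - a i : ℤ) : ℝ) + (a i : ℝ)
    push_cast; ring
  intro t ht
  have k := key_ineq hη.1 hη.2 x y t ht h0 h3
  rw [hsum]
  unfold psi
  rw [norm_add_sq_real, inner_add_left]
  nlinarith [k, hη.1, sq_nonneg ((inner ℝ x t : ℝ) - (inner ℝ y t : ℝ))]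
end

section
/- Let n ≥ 1, η ∈ [0,1], and b ∈ ℤ^n with |b| ≥ 4√n. Then there exists a vector a ∈ ℤ^n such that max_i |a_i| < max_i |b_i|, max_i |b_i − a_i| < max_i |b_i|, and ψ(b − a, t) + ψ(a, t) ≤ ψ(b, t) for every unit vector t ∈ ℝ^n. -/
/-- Splitting lemma for large `b`: if `|b| ≥ 4√n` then there is `a ∈ ℤⁿ` with
`max_i |a_i| < max_i |b_i|`, `max_i |b_i - a_i| < max_i |b_i|`, and
`ψ(b-a,t) + ψ(a,t) ≤ ψ(b,t)` for every unit vector `t`.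
Here `β = max_i |b_i|` is encoded by the hypotheses `hβub` and `hβmem`. -/
theorem psi_splitting_large_b (n : ℕ) (hn : 1 ≤ n)
    (η : ℝ) (hη : η ∈ Set.Icc (0 : ℝ) 1) (b : Fin n → ℤ)
    (hb : 4 * Real.sqrt n ≤ ‖intoE n b‖) (β : ℤ)
    (hβub : ∀ i, |b i| ≤ β) (hβmem : ∃ i, |b i| = β) :
    ∃ a : Fin n → ℤ,
      (∀ i, |a i| < β) ∧ (∀ i, |b i - a i| < β) ∧
      ∀ t : EuclideanSpace ℝ (Fin n), ‖t‖ = 1 →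
        psi n η (intoE n (b - a)) t + psi n η (intoE n a) t ≤ psi n η (intoE n b) t := by
  obtain ⟨hη0, hη1⟩ := hη
  have hn1 : (1:ℝ) ≤ (n:ℝ) := by exact_mod_cast hn
  -- norm squared formula
  have hnormsq : ∀ v : Fin n → ℤ, ‖intoE n v‖ ^ 2 = ∑ i, ((v i : ℝ))^2 := by
    intro v
    rw [EuclideanSpace.norm_eq, Real.sq_sqrt (by positivity)]
    simp [intoE, sq_abs]
  have hB16 : 16 * (n:ℝ) ≤ ‖intoE n b‖ ^ 2 := by
    have h := Real.sq_sqrt (Nat.cast_nonneg n : (0:ℝ) ≤ n)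
    nlinarith [hb, norm_nonneg (intoE n b), Real.sqrt_nonneg (n:ℝ)]
  have hβ0 : (0:ℤ) ≤ β := by
    obtain ⟨i, hi⟩ := hβmem; rw [← hi]; exact abs_nonneg _
  have hβ4 : (4:ℤ) ≤ β := by
    have hle : ‖intoE n b‖^2 ≤ (n:ℝ) * (β:ℝ)^2 := by
      rw [hnormsq]
      calc ∑ i, ((b i:ℝ))^2 ≤ ∑ _i : Fin n, (β:ℝ)^2 := by
            apply Finset.sum_le_sum; intro i _
            have h1 := hβub i
            have h2 : |(b i : ℝ)| ≤ (β:ℝ) := by exact_mod_cast (abs_le.mp h1).2 |>.trans le_rfl |> fun _ => (by exact_mod_cast h1 : |(b i:ℝ)| ≤ (β:ℝ))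
            nlinarith [abs_nonneg (b i : ℝ), sq_abs (b i : ℝ)]
        _ = (n:ℝ) * (β:ℝ)^2 := by simp [mul_comm]
    have hβr : (4:ℝ) ≤ (β:ℝ) := by
      have hβ0' : (0:ℝ) ≤ (β:ℝ) := by exact_mod_cast hβ0
      have hn0 : (0:ℝ) < (n:ℝ) := by linarith
      have h2 : (16:ℝ) ≤ (β:ℝ)^2 := by nlinarith [hB16.trans hle, hn0]
      nlinarith [h2, hβ0']
    exact_mod_cast hβr
  -- the splitting
  set e : Fin n → ℤ := fun i => b i % 2 with he
  refine ⟨fun i => b i / 2, ?_, ?_, ?_⟩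
  · intro i
    have h1 := abs_le.mp (hβub i)
    have h2 : (fun i => b i / 2) i = b i / 2 := rfl
    rw [h2, abs_lt]
    omega
  · intro i
    have h1 := abs_le.mp (hβub i)
    have h2 : b i - (fun i => b i / 2) i = b i - b i / 2 := rfl
    rw [h2, abs_lt]
    omega
  · intro t ht
    set a : Fin n → ℤ := fun i => b i / 2 with ha
    set A := intoE n a with hA
    set E := intoE n e with hE
    have hkey : ∀ i, b i = 2 * a i + e i := by intro i; simp only [ha, he]; omega
    have hCv : intoE n (b - a) = A + E := by
      ext i
      show ((b - a) i : ℝ) = A i + E i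
      simp only [Pi.sub_apply, hA, hE, intoE, PiLp.toLp_apply]
      push_cast
      have := hkey i
      push_cast [this]
      ring
    have hBv : intoE n b = A + (A + E) := by
      ext i
      show ((b i : ℤ) : ℝ) = A i + (A i + E i)
      simp only [hA, hE, intoE, PiLp.toLp_apply]
      have := hkey i
      push_cast [this]
      ring
    have hEn : ‖E‖ ^ 2 ≤ (n:ℝ) := by
      rw [hE, hnormsq]
      calc ∑ i, ((e i:ℝ))^2 ≤ ∑ _i : Fin n, (1:ℝ) := by
            apply Finset.sum_le_sum; intro i _
            have h1 : e i = 0 ∨ e i = 1 := by simp only [he]; omega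
            rcases h1 with h | h <;> simp [h]
        _ = (n:ℝ) := by simp
    have hcs : (inner ℝ E t : ℝ)^2 ≤ ‖E‖^2 := by
      have h := abs_real_inner_le_norm E t
      rw [ht, mul_one] at h
      nlinarith [abs_nonneg (inner ℝ E t : ℝ), sq_abs (inner ℝ E t : ℝ)]
    have h16 : 16 * (n:ℝ) ≤ ‖A + (A + E)‖^2 := by rw [← hBv]; exact hB16
    rw [norm_add_sq_real A (A+E), norm_add_sq_real A E, inner_add_right] at h16
    simp only [psi, hCv, hBv, inner_add_left]
    rw [norm_add_sq_real A (A+E), norm_add_sq_real A E, inner_add_right]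
    rw [real_inner_self_eq_norm_sq] at h16 ⊢
    set x := ‖A‖
    set y := ‖E‖
    set p := (inner ℝ A E : ℝ)
    set α := (inner ℝ A t : ℝ)
    set ε := (inner ℝ E t : ℝ)
    nlinarith [mul_nonneg hη0 (sq_nonneg (2*α + ε)),
      mul_nonneg (sub_nonneg.2 hη1) (sq_nonneg ε), hEn, hcs, h16, hn1,
      sq_nonneg ε]
end

section
/- Let n ≥ 1, η ∈ [0,1], and let a, b ∈ ℤ^n satisfy a·b = 0 and |b| ≤ √2 |a|. Then ψ(b, t) ≤ ψ(a + b, t) for every unit vector t ∈ ℝ^n. -/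
private lemma psi_key_ineq (η α β x y : ℝ) (hη0 : 0 ≤ η) (hη1 : η ≤ 1)
    (hα0 : 0 ≤ α) (hβ0 : 0 ≤ β) (hCx : x ^ 2 ≤ α ^ 2) (hCy : y ^ 2 ≤ β ^ 2)
    (hC : β ^ 2 ≤ 2 * α ^ 2)
    (hbessel : x ^ 2 * β ^ 2 + y ^ 2 * α ^ 2 ≤ α ^ 2 * β ^ 2) :
    β ^ 2 + η * y ^ 2 ≤ α ^ 2 + β ^ 2 + η * (x + y) ^ 2 := by
  have key : 0 ≤ α ^ 2 + η * x ^ 2 + 2 * η * x * y := by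
    rcases eq_or_lt_of_le hα0 with h0 | hαp
    · have hx0 : x = 0 := by nlinarith [sq_nonneg x]
      have hy0 : y = 0 := by nlinarith [sq_nonneg y]
      rw [hx0, hy0]; nlinarith
    rcases eq_or_lt_of_le hβ0 with h0 | hβp
    · have hy0 : y = 0 := by nlinarith [sq_nonneg y]
      rw [hy0]; nlinarith [sq_nonneg x]
    · have hfac : 0 ≤ α ^ 2 * β ^ 2 * (α ^ 2 + η * x ^ 2 + 2 * η * x * y) := by
        have e1 : α ^ 2 * β ^ 2 * (α ^ 2 + η * x ^ 2 + 2 * η * x * y)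
            = (1 - η) * (α ^ 2 * α ^ 2 * β ^ 2)
              + η * α ^ 2 * ((β ^ 2 / 2) * (2 * x + y) ^ 2
                  + (α ^ 2 - β ^ 2 / 2) * y ^ 2)
              + η * α ^ 2 * (α ^ 2 * β ^ 2 - x ^ 2 * β ^ 2 - y ^ 2 * α ^ 2) := by
          ring
        rw [e1]
        have t1 : 0 ≤ (1 - η) * (α ^ 2 * α ^ 2 * β ^ 2) := by
          apply mul_nonneg (by linarith); positivity
        have t2 : 0 ≤ η * α ^ 2 * ((β ^ 2 / 2) * (2 * x + y) ^ 2
            + (α ^ 2 - β ^ 2 / 2) * y ^ 2) := by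
          apply mul_nonneg (by positivity)
          have h3 : 0 ≤ (α ^ 2 - β ^ 2 / 2) := by linarith
          positivity
        have t3 : 0 ≤ η * α ^ 2 * (α ^ 2 * β ^ 2 - x ^ 2 * β ^ 2 - y ^ 2 * α ^ 2) := by
          apply mul_nonneg (by positivity); linarith
        linarith
      have hpos : (0:ℝ) < α ^ 2 * β ^ 2 := by positivity
      exact nonneg_of_mul_nonneg_right (by linarith) hpos
  nlinarith [key]

/-- If `a, b ∈ ℤⁿ` satisfy `a·b = 0` and `|b| ≤ √2 |a|`, then
`ψ(b,t) ≤ ψ(a+b,t)` for every unit vector `t`. -/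
theorem psi_orthogonal_monotone (n : ℕ) (hn : 1 ≤ n)
    (η : ℝ) (hη : η ∈ Set.Icc (0 : ℝ) 1) (a b : Fin n → ℤ)
    (hab : ∑ i, a i * b i = 0)
    (hnorm : ‖intoE n b‖ ≤ Real.sqrt 2 * ‖intoE n a‖) :
    ∀ t : EuclideanSpace ℝ (Fin n), ‖t‖ = 1 →
      psi n η (intoE n b) t ≤ psi n η (intoE n (a + b)) t := by
  obtain ⟨hη0, hη1⟩ := hη
  intro t ht
  set A := intoE n a with hA
  set B := intoE n b with hB
  have hAB : (inner ℝ A B : ℝ) = 0 := by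
    simp [PiLp.inner_apply, intoE, hA, hB]
    have h : ((∑ i, a i * b i : ℤ) : ℝ) = 0 := by exact_mod_cast hab
    push_cast at h
    simpa [mul_comm] using h
  have hadd : intoE n (a + b) = A + B := by
    ext i; simp [intoE, hA, hB]
  rw [hadd]
  simp only [psi]
  have hxy : (inner ℝ (A + B) t : ℝ) = inner ℝ A t + inner ℝ B t := inner_add_left A B t
  have hns : ‖A + B‖ ^ 2 = ‖A‖ ^ 2 + ‖B‖ ^ 2 := by
    rw [norm_add_sq_real, hAB]; ring
  rw [hxy, hns]
  have hα0 : 0 ≤ ‖A‖ := norm_nonneg _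
  have hβ0 : 0 ≤ ‖B‖ := norm_nonneg _
  have hCx : (inner ℝ A t : ℝ) ^ 2 ≤ ‖A‖ ^ 2 := by
    have h := abs_real_inner_le_norm A t
    rw [ht, mul_one] at h
    calc (inner ℝ A t : ℝ) ^ 2 = |(inner ℝ A t : ℝ)| ^ 2 := (sq_abs _).symm
    _ ≤ ‖A‖ ^ 2 := by apply pow_le_pow_left₀ (abs_nonneg _) h
  have hCy : (inner ℝ B t : ℝ) ^ 2 ≤ ‖B‖ ^ 2 := by
    have h := abs_real_inner_le_norm B t
    rw [ht, mul_one] at h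
    calc (inner ℝ B t : ℝ) ^ 2 = |(inner ℝ B t : ℝ)| ^ 2 := (sq_abs _).symm
    _ ≤ ‖B‖ ^ 2 := by apply pow_le_pow_left₀ (abs_nonneg _) h
  have hC : ‖B‖ ^ 2 ≤ 2 * ‖A‖ ^ 2 := by
    have h2 : (Real.sqrt 2 * ‖A‖) ^ 2 = 2 * ‖A‖ ^ 2 := by
      rw [mul_pow, Real.sq_sqrt (by norm_num)]
    calc ‖B‖ ^ 2 ≤ (Real.sqrt 2 * ‖A‖) ^ 2 := by
          apply pow_le_pow_left₀ hβ0 hnorm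
    _ = 2 * ‖A‖ ^ 2 := h2
  have hbessel : (inner ℝ A t : ℝ) ^ 2 * ‖B‖ ^ 2 + (inner ℝ B t : ℝ) ^ 2 * ‖A‖ ^ 2
      ≤ ‖A‖ ^ 2 * ‖B‖ ^ 2 := by
    rcases eq_or_ne A 0 with h0 | hA0
    · rw [h0]; simp
    rcases eq_or_ne B 0 with h0 | hB0
    · rw [h0]; simp
    have hαp : 0 < ‖A‖ := norm_pos_iff.mpr hA0
    have hβp : 0 < ‖B‖ := norm_pos_iff.mpr hB0
    set x : ℝ := inner ℝ A t with hx
    set y : ℝ := inner ℝ B t with hy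
    set α := ‖A‖ with hα
    set β := ‖B‖ with hβ
    set u := t - (x / α ^ 2) • A - (y / β ^ 2) • B with hu
    have h0 : (0:ℝ) ≤ inner ℝ u u := real_inner_self_nonneg
    have hexp : (inner ℝ u u : ℝ) = 1 - x ^ 2 / α ^ 2 - y ^ 2 / β ^ 2 := by
      have htt : (inner ℝ t t : ℝ) = 1 := by
        rw [real_inner_self_eq_norm_sq, ht]; norm_num
      have hAA : (inner ℝ A A : ℝ) = α ^ 2 := real_inner_self_eq_norm_sq A
      have hBB : (inner ℝ B B : ℝ) = β ^ 2 := real_inner_self_eq_norm_sq B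
      have hBA : (inner ℝ B A : ℝ) = 0 := by rw [real_inner_comm]; exact hAB
      have hAt : (inner ℝ A t : ℝ) = x := hx.symm
      have hBt : (inner ℝ B t : ℝ) = y := hy.symm
      have htA : (inner ℝ t A : ℝ) = x := by rw [real_inner_comm]
      have htB : (inner ℝ t B : ℝ) = y := by rw [real_inner_comm]
      rw [hu]
      simp only [inner_sub_left, inner_sub_right, real_inner_smul_left,
        real_inner_smul_right, htt, hAA, hBB, hAB, hBA, hAt, hBt, htA, htB]
      field_simp
      ring
    rw [hexp] at h0
    have h1 : x ^ 2 / α ^ 2 + y ^ 2 / β ^ 2 ≤ 1 := by linarith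
    have hαs : (0:ℝ) < α ^ 2 := by positivity
    have hβs : (0:ℝ) < β ^ 2 := by positivity
    calc x ^ 2 * β ^ 2 + y ^ 2 * α ^ 2
        = (x ^ 2 / α ^ 2 + y ^ 2 / β ^ 2) * (α ^ 2 * β ^ 2) := by field_simp
      _ ≤ 1 * (α ^ 2 * β ^ 2) := mul_le_mul_of_nonneg_right h1 (by positivity)
      _ = α ^ 2 * β ^ 2 := one_mul _
  exact psi_key_ineq η ‖A‖ ‖B‖ (inner ℝ A t) (inner ℝ B t) hη0 hη1 hα0 hβ0 hCx hCy hC hbessel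
end

section
/- In dimension n = 10 with η = 1, the splitting inequality of the previous lemmas fails: for b = 2e_1 + e_2 + ⋯ + e_10 ∈ ℤ^10 and the unit vector t = (1/2) e_1 − 12^{−1/2} (e_2 + ⋯ + e_10), one has the strict inequality ψ(b, t) < ψ(b − e_1, t) + ψ(e_1, t). -/
/-- The vector `b = 2e₁ + e₂ + ⋯ + e₁₀ ∈ ℤ¹⁰ ⊂ ℝ¹⁰`. -/
noncomputable def bTen : EuclideanSpace ℝ (Fin 10) :=
  WithLp.toLp 2 (fun i => if i = 0 then 2 else 1)

/-- The unit vector `t = (1/2) e₁ − 12^{−1/2} (e₂ + ⋯ + e₁₀)`. -/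
noncomputable def tTen : EuclideanSpace ℝ (Fin 10) :=
  WithLp.toLp 2 (fun i => if i = 0 then 1 / 2 else -(Real.sqrt 12)⁻¹)

/-- In dimension `10` with `η = 1`, the splitting inequality fails:
`ψ(b,t) < ψ(b - e₁, t) + ψ(e₁, t)` for the above `b` and `t`. -/
theorem psi_splitting_fails_dim_ten :
    psi 10 1 bTen tTen <
      psi 10 1 (bTen - EuclideanSpace.single 0 1) tTen +
        psi 10 1 (EuclideanSpace.single 0 1) tTen := by
  have h12 : (0:ℝ) < Real.sqrt 12 := Real.sqrt_pos.2 (by norm_num)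
  have hsq : Real.sqrt 12 ^ 2 = 12 := Real.sq_sqrt (by norm_num)
  set s : ℝ := (Real.sqrt 12)⁻¹ with hs
  have hspos : 0 < s := inv_pos.2 h12
  have hs2 : s ^ 2 = 1 / 12 := by
    rw [hs, inv_pow, hsq]; norm_num
  have hnorm : ∀ x : EuclideanSpace ℝ (Fin 10), ‖x‖ ^ 2 = ∑ i, x i ^ 2 := by
    intro x
    rw [EuclideanSpace.norm_eq]
    rw [Real.sq_sqrt (by positivity)]
    simp [sq_abs]
  simp only [psi, hnorm, PiLp.inner_apply, RCLike.inner_apply, conj_trivial, one_mul,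
    Fin.sum_univ_succ, Fin.sum_univ_zero, Fin.succ_ne_zero, bTen, tTen, PiLp.sub_apply, EuclideanSpace.single_apply, PiLp.toLp_apply]
  norm_num
  nlinarith [hspos, hs2, sq_nonneg (s - 1/4)]
end

section
/- Let n ≥ 2, η ∈ [0,1], and let α ∈ ℤ^n satisfy α_1 = α_2 and |α_1| = 1. Then ψ(e_1 + e_2, t) ≤ ψ(α, t) for every unit vector t ∈ ℝ^n. -/
lemma psi_key (η s r T R ε : ℝ) (hη0 : 0 ≤ η) (hη1 : η ≤ 1)
    (hε : ε ^ 2 = 1) (hT0 : 0 ≤ T) (hs : s ^ 2 ≤ 2 * (1 - T)) (hr : r ^ 2 ≤ R * T)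
    (hR : R = 0 ∨ 1 ≤ R) :
    η * s ^ 2 ≤ R + η * (ε * s + r) ^ 2 := by
  rcases hR with h | h
  · have hr0 : r = 0 := by nlinarith [sq_nonneg r]
    subst hr0 h
    simp [mul_pow, hε]
  · nlinarith [sq_nonneg (ε * s + 2 * r), mul_nonneg hη0 (sub_nonneg.2 hs),
      mul_nonneg hη0 (sub_nonneg.2 hr),
      mul_nonneg (sub_nonneg.2 hη1) (by nlinarith : (0:ℝ) ≤ 1 - T + R * T),
      mul_nonneg (sub_nonneg.2 h) (by nlinarith [sq_nonneg s] : (0:ℝ) ≤ 1 - T),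
      mul_nonneg hη0 (sq_nonneg s)]

lemma psi_pair_le_aux (n : ℕ) (η : ℝ) (hη : η ∈ Set.Icc (0:ℝ) 1) (α : Fin n → ℤ)
    (i0 i1 : Fin n) (hne : i0 ≠ i1)
    (hα12 : α i0 = α i1) (hα1 : |α i0| = 1)
    (t : EuclideanSpace ℝ (Fin n)) (ht : ‖t‖ = 1) :
    psi n η (EuclideanSpace.single i0 1 + EuclideanSpace.single i1 1) t ≤
      psi n η (intoE n α) t := by
  obtain ⟨hη0, hη1⟩ := hη
  classical
  set S : Finset (Fin n) := (Finset.univ.erase i0).erase i1 with hS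
  have hmem1 : i1 ∈ Finset.univ.erase i0 := Finset.mem_erase.2 ⟨hne.symm, Finset.mem_univ _⟩
  have hsplit : ∀ f : Fin n → ℝ, ∑ i, f i = f i0 + (f i1 + ∑ i ∈ S, f i) := by
    intro f
    rw [← Finset.add_sum_erase _ f (Finset.mem_univ i0), ← Finset.add_sum_erase _ f hmem1]
  -- abbreviations
  set R : ℝ := ∑ i ∈ S, ((α i : ℝ)) ^ 2 with hRdef
  set r : ℝ := ∑ i ∈ S, (α i : ℝ) * t i with hrdef
  set T : ℝ := ∑ i ∈ S, (t i) ^ 2 with hTdef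
  set ε : ℝ := (α i0 : ℝ) with hεdef
  set s : ℝ := t i0 + t i1 with hsdef
  have ht1 : ∑ i, t i ^ 2 = 1 := by
    have h := real_inner_self_eq_norm_sq t
    rw [ht, PiLp.inner_apply] at h
    simpa [PiLp.inner_apply, RCLike.inner_apply, pow_two] using h
  have hα_norm : ‖intoE n α‖ ^ 2 = ∑ i, (α i : ℝ) ^ 2 := by
    rw [← real_inner_self_eq_norm_sq, PiLp.inner_apply]
    simp [intoE, PiLp.inner_apply, RCLike.inner_apply, pow_two]
  have hα_inner : (inner ℝ (intoE n α) t : ℝ) = ∑ i, (α i : ℝ) * t i := by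
    simp [intoE, PiLp.inner_apply, RCLike.inner_apply, mul_comm]
  have hb_norm : ‖(EuclideanSpace.single i0 (1:ℝ) + EuclideanSpace.single i1 1)‖ ^ 2 = 2 := by
    rw [← real_inner_self_eq_norm_sq, inner_add_left, inner_add_right, inner_add_right]
    simp [inner_add_left, inner_add_right, EuclideanSpace.inner_single_left,
      EuclideanSpace.single_apply, hne, hne.symm]
    norm_num
  have hb_inner :
      (inner ℝ (EuclideanSpace.single i0 (1:ℝ) + EuclideanSpace.single i1 1) t : ℝ) = s := by
    simp [inner_add_left, EuclideanSpace.inner_single_left, hsdef]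
  have hε2 : ε ^ 2 = 1 := by
    have h2 : (α i0) ^ 2 = 1 := by rw [← sq_abs, hα1]; norm_num
    rw [hεdef]
    exact_mod_cast congrArg (fun z : ℤ => (z : ℝ)) h2
  have hT0 : (0:ℝ) ≤ T := Finset.sum_nonneg fun i _ => sq_nonneg _
  have hTsum : t i0 ^ 2 + (t i1 ^ 2 + T) = 1 := by rw [← hsplit fun i => t i ^ 2]; exact ht1
  have hs2 : s ^ 2 ≤ 2 * (1 - T) := by rw [hsdef]; nlinarith [sq_nonneg (t i0 - t i1)]
  have hCS : r ^ 2 ≤ R * T :=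
    Finset.sum_mul_sq_le_sq_mul_sq S (fun i => (α i : ℝ)) (fun i => t i)
  have hR : R = 0 ∨ 1 ≤ R := by
    by_cases hz : ∀ i ∈ S, α i = 0
    · left; exact Finset.sum_eq_zero fun i hi => by simp [hz i hi]
    · right
      push_neg at hz
      obtain ⟨j, hjS, hj⟩ := hz
      have h1 : (1:ℝ) ≤ (α j : ℝ) ^ 2 := by
        have := Int.one_le_abs hj
        have h2 : (1:ℤ) ≤ (α j) ^ 2 := by nlinarith [sq_abs (α j)]
        exact_mod_cast h2
      calc (1:ℝ) ≤ (α j : ℝ) ^ 2 := h1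
        _ ≤ R := Finset.single_le_sum (fun i _ => sq_nonneg ((α i : ℝ))) hjS
  have hαn2 : ‖intoE n α‖ ^ 2 = 2 + R := by
    rw [hα_norm, hsplit fun i => (α i : ℝ) ^ 2, ← hα12, ← hεdef, hε2]; ring
  have hαi2 : (inner ℝ (intoE n α) t : ℝ) = ε * s + r := by
    rw [hα_inner, hsplit fun i => (α i : ℝ) * t i, ← hα12, ← hεdef, ← hrdef, hsdef]; ring
  rw [psi, psi, hb_norm, hb_inner, hαn2, hαi2]
  have := psi_key η s r T R ε hη0 hη1 hε2 hT0 hs2 hCS hR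
  linarith

/-- If `α ∈ ℤⁿ` has `α₁ = α₂` and `|α₁| = 1`, then
`ψ(e₁+e₂,t) ≤ ψ(α,t)` for every unit vector `t` (here `n ≥ 2`). -/
theorem psi_pair_le (n : ℕ) (hn : 2 ≤ n)
    (η : ℝ) (hη : η ∈ Set.Icc (0 : ℝ) 1) (α : Fin n → ℤ)
    (hα12 : α ⟨0, by omega⟩ = α ⟨1, by omega⟩)
    (hα1 : |α ⟨0, by omega⟩| = 1) :
    ∀ t : EuclideanSpace ℝ (Fin n), ‖t‖ = 1 →
      psi n η
        (EuclideanSpace.single (⟨0, by omega⟩ : Fin n) 1 +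
          EuclideanSpace.single (⟨1, by omega⟩ : Fin n) 1) t
        ≤ psi n η (intoE n α) t := by
  intro t ht
  exact psi_pair_le_aux n η hη α _ _ (by simp [Fin.ext_iff]) hα12 hα1 t ht
end

section
/- Let n ≥ 1, η ∈ [0,1], β ∈ ℤ, i ∈ {1,…,n}, and let t ∈ ℝ^n be a unit vector. Let T : {−1,0,1}^n → ℝ^n be any function satisfying ∑_{α ∈ {−1,0,1}^n} α ⊗ T_α = (β e_i) ⊗ t as n×n matrices. Then ∑_{α ∈ {−1,0,1}^n} ψ̃(α, T_α) ≥ |β| ψ(e_i, t). -/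
/-- The cube `{-1,0,1}ⁿ` of integer vectors with entries in `{-1,0,1}`. -/
abbrev SignCube (n : ℕ) : Type := Fin n → ({-1, 0, 1} : Finset ℤ)

/-- The real vector associated to an element of the cube `{-1,0,1}ⁿ`. -/
noncomputable def cubeE {n : ℕ} (α : SignCube n) : EuclideanSpace ℝ (Fin n) :=
  WithLp.toLp 2 fun i => ((α i : ℤ) : ℝ)

lemma norm_sq_eucl {n : ℕ} (x : EuclideanSpace ℝ (Fin n)) : ‖x‖^2 = ∑ k, (x k)^2 := by
  rw [EuclideanSpace.norm_eq, Real.sq_sqrt (by positivity)]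
  simp [sq_abs]

lemma inner_eucl {n : ℕ} (x y : EuclideanSpace ℝ (Fin n)) :
    (inner ℝ x y : ℝ) = ∑ k, x k * y k := by
  simp [PiLp.inner_apply, mul_comm]

lemma cube_mem {n : ℕ} (α : SignCube n) (k : Fin n) :
    ((α k : ℤ):ℝ) = -1 ∨ ((α k : ℤ):ℝ) = 0 ∨ ((α k : ℤ):ℝ) = 1 := by
  have h := (α k).2
  simp only [Finset.mem_insert, Finset.mem_singleton] at h
  rcases h with h|h|h <;> rw [h] <;> norm_num

lemma pointwise_bd {n : ℕ} (η σ ti : ℝ) (hη0 : 0 ≤ η) (hη1 : η ≤ 1) (hti : ti^2 ≤ 1)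
    (hσ : σ^2 = 1) (i : Fin n) (α : SignCube n) (u : EuclideanSpace ℝ (Fin n)) :
    (1 - η*ti^2) * (|((α i : ℤ):ℝ)| * ‖u‖) + 2*η*σ*ti*(((α i : ℤ):ℝ) * u i)
      ≤ psiT n η (cubeE α) u := by
  set c : ℝ := ((α i : ℤ):ℝ) with hc
  by_cases hu : u = 0
  · subst hu
    simp [psiT]
  · have hN : 0 < ‖u‖ := norm_pos_iff.mpr hu
    set N := ‖u‖ with hNdef
    have hS : ‖cubeE α‖^2 = c^2 + ∑ k ∈ Finset.univ.erase i, ((α k : ℤ):ℝ)^2 := by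
      rw [norm_sq_eucl, ← Finset.add_sum_erase _ _ (Finset.mem_univ i)]
      rfl
    have hI : (inner ℝ (cubeE α) u : ℝ)
        = c * u i + ∑ k ∈ Finset.univ.erase i, ((α k : ℤ):ℝ) * u k := by
      rw [inner_eucl, ← Finset.add_sum_erase _ _ (Finset.mem_univ i)]
      rfl
    set m : ℝ := ∑ k ∈ Finset.univ.erase i, ((α k : ℤ):ℝ)^2 with hmdef
    set r : ℝ := ∑ k ∈ Finset.univ.erase i, ((α k : ℤ):ℝ) * u k with hrdef
    have hm0 : 0 ≤ m := Finset.sum_nonneg fun k _ => sq_nonneg _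
    have hui : (u i)^2 ≤ N^2 := by
      rw [hNdef, norm_sq_eucl]
      exact Finset.single_le_sum (f := fun k => (u k)^2) (fun k _ => sq_nonneg _)
        (Finset.mem_univ i)
    have hpsiT : psiT n η (cubeE α) u = (N^2*(c^2+m) + η*(c*u i + r)^2)/N := by
      rw [psiT, hS, hI]
      field_simp
      ring
    rw [hpsiT, le_div_iff₀ hN]
    clear_value c N m r
    have hcases : c = 0 ∨ c^2 = 1 := by
      rcases cube_mem α i with h|h|h <;> rw [← hc] at h <;> rw [h] <;> norm_num
    rcases hcases with hc0 | hc2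
    · rw [hc0, abs_zero]
      have h1 : 0 ≤ N^2*m := mul_nonneg (sq_nonneg N) hm0
      have h2 : 0 ≤ η*r^2 := mul_nonneg hη0 (sq_nonneg r)
      nlinarith only [h1, h2]
    · have habs : |c| = 1 := by
        rcases cube_mem α i with h|h|h <;> rw [← hc] at h <;> rw [h] at hc2 ⊢ <;>
          norm_num at hc2 <;> norm_num
      rw [habs]
      have hq : 0 ≤ η*(c*u i - σ*ti*N)^2 := mul_nonneg hη0 (sq_nonneg _)
      have h_a : η*σ^2*ti^2*N^2 = η*ti^2*N^2 := by rw [hσ]; ring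
      have h_b : η*c^2*(u i)^2 = η*(u i)^2 := by rw [hc2]; ring
      have h_cN : c^2*N^2 = N^2 := by rw [hc2, one_mul]
      have hηu : η*(u i)^2 ≤ N^2 := by
        nlinarith only [mul_nonneg (sub_nonneg.2 hη1) (sq_nonneg (u i)), hui]
      by_cases hm : m = 0
      · have hr : r = 0 := by
          rw [hmdef] at hm
          rw [hrdef]
          refine Finset.sum_eq_zero fun k hk => ?_
          have hz := (Finset.sum_eq_zero_iff_of_nonneg (fun k _ => sq_nonneg _)).1 hm k hk
          have h0 : ((α k : ℤ):ℝ) = 0 := (pow_eq_zero_iff two_ne_zero).1 hz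
          rw [h0, zero_mul]
        rw [hr, hm]
        nlinarith only [hq, h_a, h_b, h_cN]
      · have hm1 : (1:ℝ) ≤ m := by
          rw [hmdef] at hm
          obtain ⟨k, hk, hne⟩ := Finset.exists_ne_zero_of_sum_ne_zero hm
          have h1 : ((α k : ℤ):ℝ)^2 = 1 := by
            rcases cube_mem α k with h|h|h
            · rw [h]; norm_num
            · exact absurd (by rw [h]; norm_num) hne
            · rw [h]; norm_num
          calc (1:ℝ) = ((α k : ℤ):ℝ)^2 := h1.symm
            _ ≤ m := by
                rw [hmdef]
                exact Finset.single_le_sum (f := fun k => ((α k : ℤ):ℝ)^2)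
                  (fun k _ => sq_nonneg _) hk
        have hmN : N^2 ≤ m*N^2 := by
          nlinarith only [mul_nonneg (sub_nonneg.2 hm1) (sq_nonneg N)]
        have hq2 : 0 ≤ η*(c*u i + r)^2 := mul_nonneg hη0 (sq_nonneg _)
        nlinarith only [hq, h_a, h_b, h_cN, hηu, hq2, hmN]

/-- Lower bound for `b = β e_i`: for every `T : {-1,0,1}ⁿ → ℝⁿ` with
`∑ α ⊗ T_α = (β e_i) ⊗ t`, one has `∑ ψ̃(α, T_α) ≥ |β| ψ(e_i, t)`. -/
theorem lower_bound_beta_ei (n : ℕ) (hn : 1 ≤ n)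
    (η : ℝ) (hη : η ∈ Set.Icc (0 : ℝ) 1) (β : ℤ) (i : Fin n)
    (t : EuclideanSpace ℝ (Fin n)) (ht : ‖t‖ = 1)
    (T : SignCube n → EuclideanSpace ℝ (Fin n))
    (hmoment :
      (∑ α : SignCube n, (Matrix.of fun k j => cubeE α k * T α j : Matrix (Fin n) (Fin n) ℝ)) =
        (Matrix.of fun k j => ((β : ℝ) • (EuclideanSpace.single i 1 : EuclideanSpace ℝ (Fin n))) k * t j :
          Matrix (Fin n) (Fin n) ℝ)) :
    (|β| : ℝ) * psi n η (EuclideanSpace.single i 1) t ≤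
      ∑ α : SignCube n, psiT n η (cubeE α) (T α) := by
  obtain ⟨hη0, hη1⟩ := hη
  set σ : ℝ := if β < 0 then -1 else 1 with hσdef
  have hσ2 : σ^2 = 1 := by rw [hσdef]; split_ifs <;> norm_num
  have hσabs : |σ| = 1 := by rw [hσdef]; split_ifs <;> norm_num
  have hσβ : σ * (β:ℝ) = |(β:ℝ)| := by
    rw [hσdef]; split_ifs with h
    · rw [abs_of_neg (by exact_mod_cast h : (β:ℝ) < 0)]; ring
    · rw [abs_of_nonneg (by exact_mod_cast not_lt.1 h : (0:ℝ) ≤ (β:ℝ))]; ring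
  have hti2 : (t i)^2 ≤ 1 := by
    calc (t i)^2 ≤ ∑ k, (t k)^2 :=
          Finset.single_le_sum (f := fun k => (t k)^2) (fun k _ => sq_nonneg _)
            (Finset.mem_univ i)
      _ = 1 := by rw [← norm_sq_eucl, ht]; norm_num
  have hpsi : psi n η (EuclideanSpace.single i 1) t = 1 + η * (t i)^2 := by
    rw [psi, EuclideanSpace.norm_single, EuclideanSpace.inner_single_left]
    norm_num
  have hrow : ∀ j, ∑ α : SignCube n, ((α i : ℤ):ℝ) * T α j = (β:ℝ) * t j := by
    intro j
    have h := Matrix.ext_iff.2 hmoment i j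
    simpa [Matrix.sum_apply, cubeE, EuclideanSpace.single_apply, PiLp.smul_apply,
      smul_eq_mul] using h
  have hFv : ∑ α : SignCube n, (σ * ((α i:ℤ):ℝ)) • T α = (σ * (β:ℝ)) • t := by
    ext j
    rw [WithLp.ofLp_sum, Finset.sum_apply]
    simp only [PiLp.smul_apply, smul_eq_mul, mul_assoc]
    rw [← Finset.mul_sum, hrow j]
  have hnorm : |(β:ℝ)| ≤ ∑ α : SignCube n, |((α i:ℤ):ℝ)| * ‖T α‖ := by
    have h1 : ‖(σ*(β:ℝ)) • t‖ = |(β:ℝ)| := by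
      rw [norm_smul, ht, Real.norm_eq_abs, abs_mul, hσabs, one_mul, mul_one]
    calc |(β:ℝ)| = ‖∑ α : SignCube n, (σ * ((α i:ℤ):ℝ)) • T α‖ := by rw [hFv, h1]
      _ ≤ ∑ α : SignCube n, ‖(σ * ((α i:ℤ):ℝ)) • T α‖ := norm_sum_le _ _
      _ = ∑ α : SignCube n, |((α i:ℤ):ℝ)| * ‖T α‖ := by
          refine Finset.sum_congr rfl fun α _ => ?_
          rw [norm_smul, Real.norm_eq_abs, abs_mul, hσabs, one_mul]
  have h1mt : 0 ≤ 1 - η*(t i)^2 := by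
    nlinarith only [mul_nonneg hη0 (sub_nonneg.2 hti2), hη1]
  calc |(β:ℝ)| * psi n η (EuclideanSpace.single i 1) t
      = (1 - η*(t i)^2) * |(β:ℝ)| + 2*η*σ*(t i) * ((β:ℝ) * t i) := by
        rw [hpsi]
        linear_combination (-(2*η*(t i)^2)) * hσβ
    _ ≤ (1 - η*(t i)^2) * (∑ α : SignCube n, |((α i:ℤ):ℝ)| * ‖T α‖)
        + 2*η*σ*(t i) * (∑ α : SignCube n, ((α i:ℤ):ℝ) * T α i) := by
        rw [hrow i]
        exact add_le_add_left (mul_le_mul_of_nonneg_left hnorm h1mt) _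
    _ = ∑ α : SignCube n, ((1 - η*(t i)^2) * (|((α i:ℤ):ℝ)| * ‖T α‖)
        + 2*η*σ*(t i) * (((α i:ℤ):ℝ) * T α i)) := by
        rw [Finset.sum_add_distrib, Finset.mul_sum, Finset.mul_sum]
    _ ≤ ∑ α : SignCube n, psiT n η (cubeE α) (T α) :=
        Finset.sum_le_sum fun α _ => pointwise_bd η σ (t i) hη0 hη1 hti2 hσ2 i α (T α)
end

section
/- For all m = (m_1, m_2) ∈ ℝ² and d = (d_1, d_2) ∈ ℝ² with m − d ≠ 0 and m + d ≠ 0, one has 2|d| + (m_1 − d_1)²/|m − d| + (m_2 + d_2)²/|m + d| ≥ |m|, where |·| denotes the Euclidean norm on ℝ². -/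
set_option maxHeartbeats 2000000 in
private lemma DA_lem (p q r s : ℝ) (hA : 0 < p^2+q^2) (hB : 0 < r^2+s^2)
    (hs : p*q*(r*s) ≤ 0) :
    p^2*q^2*(r^2+s^2) + r^2*s^2*(p^2+q^2) - (p*q*(r*s))*((p^2+q^2)+(r^2+s^2))
      ≤ (p^2+q^2)*(r^2+s^2)*((p-r)^2+(q-s)^2) := by
  have hPX : 0 < 4*((p^2+q^2)^2*(r^2+s^2) - (r^2+s^2)*(p*q)^2 + (p^2+q^2)*(p*q*(r*s))) := by
    nlinarith [mul_pos (mul_pos hA hA) hB, mul_nonneg hB.le (sq_nonneg (p^2-q^2)),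
      mul_nonneg hA.le (mul_nonneg (sq_nonneg (p+q)) (sq_nonneg (r+s))),
      mul_nonneg hA.le (mul_nonneg (sq_nonneg (p-q)) (sq_nonneg (r-s)))]
  have hW : 0 ≤ (p^2+q^2)*(r^2+s^2)*(q*r+p*s)^2 - (p*q*(r*s))*(p*r-q*s)^2 := by
    nlinarith [mul_nonneg (mul_nonneg hA.le hB.le) (sq_nonneg (q*r+p*s)),
      mul_nonneg (neg_nonneg.mpr hs) (sq_nonneg (p*r-q*s))]
  have hW2 : 0 ≤ (q*r-p*s)^2 * ((p^2+q^2)*(r^2+s^2)*(q*r+p*s)^2 - (p*q*(r*s))*(p*r-q*s)^2) :=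
    mul_nonneg (sq_nonneg _) hW
  have hkey : 0 ≤ 4*(4*((p^2+q^2)^2*(r^2+s^2) - (r^2+s^2)*(p*q)^2 + (p^2+q^2)*(p*q*(r*s)))) *
      ((p^2+q^2)*(r^2+s^2)*((p-r)^2+(q-s)^2) -
        (p^2*q^2*(r^2+s^2) + r^2*s^2*(p^2+q^2) - (p*q*(r*s))*((p^2+q^2)+(r^2+s^2)))) := by
    linarith [sq_nonneg (4*((p^2+q^2)^2*(r^2+s^2) - (r^2+s^2)*(p*q)^2 + (p^2+q^2)*(p*q*(r*s)))
      - 4*(p*r+q*s)*((p^2+q^2)*(r^2+s^2))), hW2]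
  nlinarith [hkey, hPX]

set_option maxHeartbeats 2000000 in
private lemma DB_lem (p q r s : ℝ) (hA : 0 < p^2+q^2) (hB : 0 < r^2+s^2)
    (hs : 0 ≤ p*q*(r*s)) :
    p^2*q^2*(r^2+s^2) + r^2*s^2*(p^2+q^2) - 2*(p*q*(r*s))*(p*r+q*s)
      ≤ (p^2+q^2)*(r^2+s^2)*((p-r)^2+(q-s)^2) := by
  have hu2 : 0 < (r^2+s^2)*((p^2+q^2)^2 - (p*q)^2) := by
    nlinarith [mul_pos hB (mul_pos hA hA), mul_nonneg hB.le (sq_nonneg (p^2-q^2))]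
  have h1 : 0 ≤ 2*(p*q*(r*s)) + (p*s-q*r)^2 := by
    have := sq_nonneg (p*s-q*r); linarith
  have hrem : 0 ≤ 4*((p*s-q*r)^2 * ((p*q*(r*s))^2 +
      (p^2+q^2)*(r^2+s^2)*(2*(p*q*(r*s)) + (p*s-q*r)^2))) := by
    have h2 : 0 ≤ (p*q*(r*s))^2 + (p^2+q^2)*(r^2+s^2)*(2*(p*q*(r*s)) + (p*s-q*r)^2) :=
      add_nonneg (sq_nonneg _) (mul_nonneg (mul_nonneg hA.le hB.le) h1)
    positivity
  have hkey : 0 ≤ 4*((r^2+s^2)*((p^2+q^2)^2 - (p*q)^2)) *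
      ((p^2+q^2)*(r^2+s^2)*((p-r)^2+(q-s)^2) -
        (p^2*q^2*(r^2+s^2) + r^2*s^2*(p^2+q^2) - 2*(p*q*(r*s))*(p*r+q*s))) := by
    linarith [sq_nonneg (2*((r^2+s^2)*((p^2+q^2)^2 - (p*q)^2)) -
      (p*r+q*s)*(2*((p^2+q^2)*(r^2+s^2) - p*q*(r*s)))), hrem]
  nlinarith [hkey, hu2]

set_option maxHeartbeats 1000000 in
private lemma corelem (p q r s a b c : ℝ) (ha : 0 < a) (hb : 0 < b) (hc : 0 ≤ c)
    (ha2 : a^2 = p^2+q^2) (hb2 : b^2 = r^2+s^2) (hc2 : c^2 = (p-r)^2+(q-s)^2) :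
    p*q*b - r*s*a ≤ a*b*c := by
  have hA : 0 < p^2+q^2 := by rw [← ha2]; positivity
  have hB : 0 < r^2+s^2 := by rw [← hb2]; positivity
  have habc : 0 ≤ a*b*c := by positivity
  rcases le_or_gt (p*q*b - r*s*a) 0 with h0|h0
  · linarith
  have hABC : (a*b*c)^2 = (p^2+q^2)*((r^2+s^2)*((p-r)^2+(q-s)^2)) := by
    rw [← ha2, ← hb2, ← hc2]; ring
  have hsq : (p*q*b - r*s*a)^2 ≤ (a*b*c)^2 := by
    rcases le_or_gt (p*q*(r*s)) 0 with hs1|hs1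
    · have hDA := DA_lem p q r s hA hB hs1
      have hmul : (-(p*q*(r*s)))*(2*(a*b)) ≤ (-(p*q*(r*s)))*(a^2+b^2) :=
        mul_le_mul_of_nonneg_left (by nlinarith [sq_nonneg (a-b)]) (by linarith)
      calc (p*q*b - r*s*a)^2
          = p^2*q^2*b^2 + r^2*s^2*a^2 + (-(p*q*(r*s)))*(2*(a*b)) := by ring
        _ ≤ p^2*q^2*b^2 + r^2*s^2*a^2 + (-(p*q*(r*s)))*(a^2+b^2) := by linarith
        _ = p^2*q^2*(r^2+s^2) + r^2*s^2*(p^2+q^2) - (p*q*(r*s))*((p^2+q^2)+(r^2+s^2)) := by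
            rw [ha2, hb2]; ring
        _ ≤ (p^2+q^2)*(r^2+s^2)*((p-r)^2+(q-s)^2) := hDA
        _ = (a*b*c)^2 := by rw [hABC]; ring
    · have hDB := DB_lem p q r s hA hB hs1.le
      have hab2 : (a*b)^2 = (p^2+q^2)*(r^2+s^2) := by rw [mul_pow, ha2, hb2]
      have hab0 : 0 < a*b := mul_pos ha hb
      have he : p*r + q*s ≤ a*b := by nlinarith [sq_nonneg (p*s - q*r), hab2, hab0]
      have hmul : (p*q*(r*s))*(p*r+q*s) ≤ (p*q*(r*s))*(a*b) :=
        mul_le_mul_of_nonneg_left he hs1.le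
      calc (p*q*b - r*s*a)^2
          = p^2*q^2*b^2 + r^2*s^2*a^2 - 2*((p*q*(r*s))*(a*b)) := by ring
        _ ≤ p^2*q^2*b^2 + r^2*s^2*a^2 - 2*((p*q*(r*s))*(p*r+q*s)) := by linarith
        _ = p^2*q^2*(r^2+s^2) + r^2*s^2*(p^2+q^2) - 2*(p*q*(r*s))*(p*r+q*s) := by
            rw [ha2, hb2]; ring
        _ ≤ (p^2+q^2)*(r^2+s^2)*((p-r)^2+(q-s)^2) := hDB
        _ = (a*b*c)^2 := by rw [hABC]; ring
  nlinarith [hsq, h0, habc]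

private lemma corelem2 (x0 x1 y0 y1 a b c : ℝ) (ha : 0 < a) (hb : 0 < b) (hc : 0 ≤ c)
    (ha2 : a^2 = x0^2 + x1^2) (hb2 : b^2 = y0^2 + y1^2)
    (hc2 : c^2 = (y0-x0)^2 + (y1-x1)^2) :
    b*(x1^2 - x0^2) + a*(y0^2 - y1^2) ≤ 2*(a*b*c) := by
  have hs2 : (0:ℝ) < Real.sqrt 2 := Real.sqrt_pos.mpr (by norm_num)
  have h22 : Real.sqrt 2 * Real.sqrt 2 = 2 := Real.mul_self_sqrt (by norm_num)
  have h := corelem (x0+x1) (x1-x0) (y0+y1) (y1-y0)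
      (Real.sqrt 2 * a) (Real.sqrt 2 * b) (Real.sqrt 2 * c)
      (by positivity) (by positivity) (by positivity)
      (by rw [mul_pow, Real.sq_sqrt (by norm_num : (0:ℝ) ≤ 2)]; linear_combination 2*ha2)
      (by rw [mul_pow, Real.sq_sqrt (by norm_num : (0:ℝ) ≤ 2)]; linear_combination 2*hb2)
      (by rw [mul_pow, Real.sq_sqrt (by norm_num : (0:ℝ) ≤ 2)]; linear_combination 2*hc2)
  have h23 : Real.sqrt 2 * Real.sqrt 2 * Real.sqrt 2 * (a*(b*c)) =
      2 * (Real.sqrt 2 * (a*(b*c))) := by rw [h22]; ring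
  nlinarith [h, h23, hs2]

/-- For `m, d ∈ ℝ²` with `m − d ≠ 0` and `m + d ≠ 0`:
`2|d| + (m₁−d₁)²/|m−d| + (m₂+d₂)²/|m+d| ≥ |m|`. -/
theorem two_dim_norm_inequality (m d : EuclideanSpace ℝ (Fin 2))
    (hmd : m - d ≠ 0) (hmd' : m + d ≠ 0) :
    ‖m‖ ≤ 2 * ‖d‖ + (m 0 - d 0) ^ 2 / ‖m - d‖ + (m 1 + d 1) ^ 2 / ‖m + d‖ := by
  have normsq : ∀ (x : EuclideanSpace ℝ (Fin 2)), ‖x‖^2 = (x 0)^2 + (x 1)^2 := by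
    intro x
    rw [EuclideanSpace.norm_eq, Real.sq_sqrt (by positivity)]
    simp [Fin.sum_univ_two, Real.norm_eq_abs, sq_abs]
  set a := ‖m - d‖ with hadef
  set b := ‖m + d‖ with hbdef
  have ha : 0 < a := norm_pos_iff.mpr hmd
  have hb : 0 < b := norm_pos_iff.mpr hmd'
  have hd0 : (0:ℝ) ≤ ‖d‖ := norm_nonneg d
  have ha2 : a^2 = (m 0 - d 0)^2 + (m 1 - d 1)^2 := by
    rw [hadef, normsq]; rfl
  have hb2 : b^2 = (m 0 + d 0)^2 + (m 1 + d 1)^2 := by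
    rw [hbdef, normsq]; rfl
  have hd2 : ‖d‖^2 = (d 0)^2 + (d 1)^2 := normsq d
  have hc2 : (2*‖d‖)^2 = ((m 0 + d 0)-(m 0 - d 0))^2 + ((m 1 + d 1)-(m 1 - d 1))^2 := by
    linear_combination 4*hd2
  have key := corelem2 (m 0 - d 0) (m 1 - d 1) (m 0 + d 0) (m 1 + d 1) a b (2*‖d‖)
      ha hb (by positivity) ha2 hb2 hc2
  -- ‖m‖ ≤ (a+b)/2
  have hmm : m + m = (m - d) + (m + d) := by abel
  have h2m : ‖m + m‖ = 2 * ‖m‖ := by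
    rw [← two_smul ℝ m, norm_smul]; simp
  have hm : ‖m‖ ≤ (a + b)/2 := by
    have := norm_add_le (m - d) (m + d)
    rw [← hmm, h2m] at this
    linarith
  -- rewrite divisions
  have e1 : (m 0 - d 0)^2/a = a - (m 1 - d 1)^2/a := by
    field_simp
    linarith [ha2]
  have e2 : (m 1 + d 1)^2/b = b - (m 0 + d 0)^2/b := by
    field_simp
    linarith [hb2]
  rw [e1, e2]
  have e3 : (m 1 - d 1)^2/a + (m 0 + d 0)^2/b = (b*(m 1 - d 1)^2 + a*(m 0 + d 0)^2)/(a*b) := by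
    field_simp
  have e4 : a^2*b = ((m 0 - d 0)^2 + (m 1 - d 1)^2)*b := by rw [ha2]
  have e5 : a*b^2 = a*((m 0 + d 0)^2 + (m 1 + d 1)^2) := by rw [hb2]
  have hfin : (m 1 - d 1)^2/a + (m 0 + d 0)^2/b ≤ 2*‖d‖ + (a+b)/2 := by
    rw [e3, div_le_iff₀ (mul_pos ha hb)]
    nlinarith [key, e4, e5]
  linarith
end
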